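/- arXiv:2306.11834 — 5 statements merged into one kernel-verified Lean document; each statement's English description precedes it below -/
import Mathlib

section
/- Set C := 1/20 and, for μ > 0, k₀ := (1 + Cμ)^{−1/2}, 𝒯⁻(μ) := (3/4)·log(320/μ), 𝒯⁺(μ) := π·log(640/μ). Then for every μ ∈ (0, 10⁻⁵], 𝒯⁻(μ) < 2·k₀·K(k₀) < 𝒯⁺(μ). -/
/-!
Substituting `x ↦ π/2 - x` writes `K(m) = ∫₀^{π/2} (k'² + m² sin² t)^{-1/2} dt` with
`k' = √(1 - m²)`. Jordan's inequality `2t/π ≤ sin t ≤ t` compares this with integrals of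
`(k'² + a² t²)^{-1/2}`, which are arsinh's, giving
`2 arsinh (π m / (2k')) ≤ 2 m K(m) ≤ π arsinh (m / k')`.
For `m = k₀` the ratio `m / k'` is exactly `√(20/μ)`, and since `log 2y ≤ arsinh y ≤ log (1 + 2y)`
both claims reduce to crude inequalities between logarithms.
-/

open Real MeasureTheory intervalIntegral

/-- Complete elliptic integral of the first kind, K(m) = ∫₀^{π/2} (1 − m² sin²x)^{−1/2} dx. -/
noncomputable def ellK (m : ℝ) : ℝ :=
  ∫ x in (0:ℝ)..(π / 2), 1 / Real.sqrt (1 - m ^ 2 * Real.sin x ^ 2)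

namespace Real

theorem log_two_mul_le_arsinh {x : ℝ} (hx : 0 < x) : log (2 * x) ≤ arsinh x := by
  rw [← exp_le_exp, exp_log (by positivity), exp_arsinh]
  linarith [le_sqrt_of_sq_le (show x ^ 2 ≤ 1 + x ^ 2 by linarith)]

theorem arsinh_le_log_one_add_two_mul {x : ℝ} (hx : 0 ≤ x) : arsinh x ≤ log (1 + 2 * x) := by
  rw [← exp_le_exp, exp_log (by positivity), exp_arsinh]
  linarith [(sqrt_le_left (by linarith : 0 ≤ 1 + x)).2 (by nlinarith : 1 + x ^ 2 ≤ (1 + x) ^ 2)]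

end Real

theorem integral_one_div_sqrt_add_mul_sq {d a : ℝ} (hd : 0 < d) (ha : a ≠ 0) (b : ℝ) :
    ∫ t in (0:ℝ)..b, 1 / √(d + (a * t) ^ 2) = arsinh (a * b / √d) / a := by
  have hderiv : ∀ t ∈ Set.uIcc 0 b,
      HasDerivAt (fun t => arsinh (a * t / √d) / a) (1 / √(d + (a * t) ^ 2)) t := by
    intro t _
    refine ((((hasDerivAt_id t).const_mul a).div_const √d).arsinh.div_const a).congr_deriv ?_
    have : √(1 + (a * t / √d) ^ 2) = √(d + (a * t) ^ 2) / √d := by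
      rw [div_pow, sq_sqrt hd.le, ← sqrt_div' _ hd.le]
      congr 1
      field_simp
    rw [id, this, smul_eq_mul]
    field_simp
  have hcont : Continuous fun t => 1 / √(d + (a * t) ^ 2) :=
    continuous_const.div (by fun_prop) fun t => (sqrt_pos.2 (by positivity)).ne'
  rw [integral_eq_sub_of_hasDerivAt hderiv (hcont.intervalIntegrable 0 b)]
  simp

theorem integral_one_div_sqrt_add_sq_le_of_le {d b : ℝ} (hd : 0 < d) (hb : 0 ≤ b)
    {f g : ℝ → ℝ} (hf : Continuous f) (hg : Continuous g)
    (hf0 : ∀ t ∈ Set.Icc 0 b, 0 ≤ f t) (hfg : ∀ t ∈ Set.Icc 0 b, f t ≤ g t) :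
    ∫ t in (0:ℝ)..b, 1 / √(d + g t ^ 2) ≤ ∫ t in (0:ℝ)..b, 1 / √(d + f t ^ 2) := by
  have hcont : ∀ h : ℝ → ℝ, Continuous h → Continuous fun t => 1 / √(d + h t ^ 2) :=
    fun h hh => continuous_const.div (by fun_prop) fun t => (sqrt_pos.2 (by positivity)).ne'
  refine integral_mono_on hb ((hcont g hg).intervalIntegrable 0 b)
    ((hcont f hf).intervalIntegrable 0 b) fun t ht => ?_
  gcongr
  exacts [hf0 t ht, hfg t ht]

theorem ellK_eq_integral_sin (m : ℝ) :
    ellK m = ∫ t in (0:ℝ)..(π / 2), 1 / √((1 - m ^ 2) + (m * sin t) ^ 2) := by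
  have h := integral_comp_sub_left (a := 0) (b := π / 2)
    (fun t => 1 / √((1 - m ^ 2) + (m * sin t) ^ 2)) (π / 2)
  simp only [sub_zero, sub_self] at h
  rw [ellK, ← h]
  congr 1
  ext t
  rw [sin_pi_div_two_sub, mul_pow, cos_sq']
  ring_nf

section ellK
variable {m : ℝ}

theorem arsinh_le_mul_ellK (hm0 : 0 < m) (hm1 : m < 1) :
    arsinh (π / 2 * (m / √(1 - m ^ 2))) ≤ m * ellK m := by
  have hd : 0 < 1 - m ^ 2 := by nlinarith
  have h := integral_one_div_sqrt_add_sq_le_of_le hd (by positivity : 0 ≤ π / 2)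
    (f := fun t => m * sin t) (g := fun t => m * t) (by fun_prop) (by fun_prop)
    (fun t ht => mul_nonneg hm0.le
      (sin_nonneg_of_nonneg_of_le_pi ht.1 (by linarith [ht.2, pi_pos])))
    (fun t ht => mul_le_mul_of_nonneg_left (sin_le ht.1) hm0.le)
  rw [integral_one_div_sqrt_add_mul_sq hd hm0.ne', ← ellK_eq_integral_sin, div_le_iff₀' hm0] at h
  rwa [mul_div_right_comm, mul_comm _ (π / 2)] at h

theorem mul_ellK_le_arsinh (hm0 : 0 < m) (hm1 : m < 1) :
    m * ellK m ≤ π / 2 * arsinh (m / √(1 - m ^ 2)) := by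
  have hd : 0 < 1 - m ^ 2 := by nlinarith
  have ha : 0 < 2 / π * m := by positivity
  have h := integral_one_div_sqrt_add_sq_le_of_le hd (by positivity : 0 ≤ π / 2)
    (f := fun t => 2 / π * m * t) (g := fun t => m * sin t) (by fun_prop) (by fun_prop)
    (fun t ht => mul_nonneg ha.le ht.1)
    (fun t ht => by
      rw [mul_right_comm, mul_comm m]
      exact mul_le_mul_of_nonneg_right (mul_le_sin ht.1 ht.2) hm0.le)
  rw [integral_one_div_sqrt_add_mul_sq hd ha.ne', ← ellK_eq_integral_sin, le_div_iff₀ ha] at h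
  have hπ : 2 / π * m * (π / 2) = m := by field_simp
  rw [hπ] at h
  calc m * ellK m = π / 2 * (ellK m * (2 / π * m)) := by field_simp
    _ ≤ π / 2 * arsinh (m / √(1 - m ^ 2)) := by gcongr

end ellK

theorem rpow_neg_half_div_sqrt_one_sub_sq {x : ℝ} (hx : 0 < x) :
    (1 + x) ^ (-(1 / 2) : ℝ) / √(1 - ((1 + x) ^ (-(1 / 2) : ℝ)) ^ 2) = 1 / √x := by
  have h1x : 0 < 1 + x := by linarith
  have hsq : ((1 + x) ^ (-(1 / 2) : ℝ)) ^ 2 = 1 / (1 + x) := by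
    rw [← rpow_natCast, ← rpow_mul h1x.le]
    norm_num [rpow_neg_one]
  rw [hsq, rpow_neg h1x.le, ← sqrt_eq_rpow, show 1 - 1 / (1 + x) = x / (1 + x) by field_simp; ring,
    sqrt_div' _ h1x.le]
  field_simp

theorem three_quarters_log_lt_two_arsinh {μ : ℝ} (hμ0 : 0 < μ) (hμ : μ ≤ 32) :
    3 / 4 * log (320 / μ) < 2 * arsinh (π / 2 * √(20 / μ)) := by
  have hpow : (320 / μ) ^ 3 < (180 / μ) ^ 4 := by
    rw [div_pow, div_pow, div_lt_div_iff₀ (by positivity) (by positivity)]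
    have : 0 < μ ^ 3 := by positivity
    nlinarith
  have hlog := log_lt_log (by positivity) hpow
  rw [log_pow, log_pow] at hlog
  have h180 : 180 / μ ≤ (π * √(20 / μ)) ^ 2 := by
    rw [mul_pow, sq_sqrt (by positivity), mul_div, div_le_div_iff_of_pos_right hμ0]
    nlinarith [pi_gt_three]
  calc 3 / 4 * log (320 / μ) < log (180 / μ) := by push_cast at hlog; linarith
    _ ≤ log ((π * √(20 / μ)) ^ 2) := log_le_log (by positivity) h180
    _ = 2 * log (2 * (π / 2 * √(20 / μ))) := by rw [log_pow]; push_cast; ring_nf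
    _ ≤ 2 * arsinh (π / 2 * √(20 / μ)) := by gcongr; exact log_two_mul_le_arsinh (by positivity)

theorem arsinh_sqrt_lt_log {μ : ℝ} (hμ0 : 0 < μ) (hμ : μ < 310) :
    arsinh √(20 / μ) < log (640 / μ) := by
  have hr2 : √(20 / μ) ^ 2 = 20 / μ := sq_sqrt (by positivity)
  have h620 : 2 < 620 / μ := by rw [lt_div_iff₀ hμ0]; linarith
  calc arsinh √(20 / μ) ≤ log (1 + 2 * √(20 / μ)) := arsinh_le_log_one_add_two_mul (by positivity)
    _ < log (640 / μ) := by
        gcongr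
        nlinarith [sq_nonneg (√(20 / μ) - 1), show 640 / μ = 20 / μ + 620 / μ by ring]

/-- With C = 1/20, k₀ = (1+Cμ)^{−1/2}, 𝒯⁻(μ) = (3/4)log(320/μ), 𝒯⁺(μ) = π log(640/μ):
for every μ ∈ (0,10⁻⁵], 𝒯⁻(μ) < 2k₀K(k₀) < 𝒯⁺(μ). -/
theorem transition_time_bounds (μ : ℝ) (hμ : μ ∈ Set.Ioc (0:ℝ) (1/100000)) :
    (3/4 : ℝ) * Real.log (320 / μ) <
        2 * (1 + (1/20) * μ) ^ (-(1/2) : ℝ) * ellK ((1 + (1/20) * μ) ^ (-(1/2) : ℝ)) ∧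
      2 * (1 + (1/20) * μ) ^ (-(1/2) : ℝ) * ellK ((1 + (1/20) * μ) ^ (-(1/2) : ℝ)) <
        π * Real.log (640 / μ) := by
  obtain ⟨hμ0, hμ1⟩ := hμ
  set k := (1 + 1 / 20 * μ) ^ (-(1 / 2) : ℝ)
  have hk0 : 0 < k := by positivity
  have hk1 : k < 1 := rpow_lt_one_of_one_lt_of_neg (by linarith) (by norm_num)
  have hr : k / √(1 - k ^ 2) = √(20 / μ) := by
    rw [rpow_neg_half_div_sqrt_one_sub_sq (by positivity), one_div, ← sqrt_inv]
    congr 1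
    field_simp
  constructor
  · calc 3 / 4 * log (320 / μ) < 2 * arsinh (π / 2 * √(20 / μ)) :=
          three_quarters_log_lt_two_arsinh hμ0 (by linarith)
      _ ≤ 2 * k * ellK k := by linarith [hr ▸ arsinh_le_mul_ellK hk0 hk1]
  · calc 2 * k * ellK k ≤ π * arsinh √(20 / μ) := by linarith [hr ▸ mul_ellK_le_arsinh hk0 hk1]
      _ < π * log (640 / μ) := by gcongr; exact arsinh_sqrt_lt_log hμ0 (by linarith)
end

section
/- Define the Melnikov function M : (0,∞) → ℝ by M(ω) := 2πω / sinh(πω/2). Then for every ω ∈ (0,1], the first and second derivatives of M satisfy |M'(ω)| ≤ 4 and |M''(ω)| ≤ 7/2. -/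
/-!
Write `M(ω) = 4 g(πω/2)` with `g(u) = u / sinh u`, so that `M' = 2π g'` and `M'' = π² g''`.
With `s = sinh u`, `c = cosh u` one has `g' = (s - u c)/s²` and
`g'' = (2u c² - u s² - 2 s c)/s³`. The elementary inequalities `0 ≤ u c - s ≤ (u²/2) s` and
`s ≥ u + u³/6` give `|g'(u)| ≤ 3u/(6 + u²)`, and `2π · 3u/(6 + u²) ≤ 4` because `π² < 32/3`.
For the numerator of `g''`, `sinh 2u ≥ 2u + (2u)³/6` gives the upper bound `s³/3` and a
monotonicity argument the lower bound `-s³/3`, so `|g''| ≤ 1/3` and `|M''| ≤ π²/3 < 7/2`.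
-/

open Real

theorem nonneg_of_hasDerivAt_nonneg {F F' : ℝ → ℝ} (hF : ∀ x, HasDerivAt F (F' x) x)
    (h0 : 0 ≤ F 0) (hF' : ∀ x, 0 ≤ x → 0 ≤ F' x) {x : ℝ} (hx : 0 ≤ x) : 0 ≤ F x := by
  have hmono : MonotoneOn F (Set.Ici 0) :=
    monotoneOn_of_hasDerivWithinAt_nonneg (convex_Ici 0)
      (fun y _ ↦ (hF y).continuousAt.continuousWithinAt)
      (fun y _ ↦ (hF y).hasDerivWithinAt)
      (fun y hy ↦ hF' y (interior_subset hy))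
  exact h0.trans (hmono Set.self_mem_Ici hx hx)

namespace Real

theorem add_pow_three_div_six_le_sinh {x : ℝ} (hx : 0 ≤ x) : x + x ^ 3 / 6 ≤ sinh x := by
  have := sum_le_hasSum (Finset.range 2) (fun n _ ↦ by positivity) (hasSum_sinh x)
  norm_num [Finset.sum_range_succ, Nat.factorial] at this
  linarith

theorem sinh_le_mul_cosh {x : ℝ} (hx : 0 ≤ x) : sinh x ≤ x * cosh x := by
  have := nonneg_of_hasDerivAt_nonneg (F := fun x ↦ x * cosh x - sinh x)
    (fun x ↦ (((hasDerivAt_id x).fun_mul (hasDerivAt_cosh x)).fun_sub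
      (hasDerivAt_sinh x)).congr_deriv (by simp))
    (by simp) (fun x hx ↦ mul_nonneg hx (sinh_nonneg_iff.2 hx)) hx
  linarith

theorem mul_cosh_sub_sinh_le {x : ℝ} (hx : 0 ≤ x) :
    x * cosh x - sinh x ≤ x ^ 2 / 2 * sinh x := by
  have := nonneg_of_hasDerivAt_nonneg (F := fun x ↦ x ^ 2 / 2 * sinh x - (x * cosh x - sinh x))
    (fun x ↦ ((((hasDerivAt_pow 2 x).div_const 2).fun_mul (hasDerivAt_sinh x)).fun_sub
      (((hasDerivAt_id x).fun_mul (hasDerivAt_cosh x)).fun_sub (hasDerivAt_sinh x))).congr_deriv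
      (show _ = x ^ 2 / 2 * cosh x by simp))
    (by simp) (fun x _ ↦ by positivity) hx
  linarith

end Real

namespace Melnikov

noncomputable def divSinhDeriv (u : ℝ) : ℝ := (sinh u - u * cosh u) / sinh u ^ 2

noncomputable def divSinhDeriv2 (u : ℝ) : ℝ :=
  (2 * u * cosh u ^ 2 - u * sinh u ^ 2 - 2 * sinh u * cosh u) / sinh u ^ 3

theorem hasDerivAt_div_sinh {u : ℝ} (hu : u ≠ 0) :
    HasDerivAt (fun u ↦ u / sinh u) (divSinhDeriv u) u := by
  refine ((hasDerivAt_id u).fun_div (hasDerivAt_sinh u) (sinh_ne_zero.2 hu)).congr_deriv ?_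
  simp [divSinhDeriv]

theorem hasDerivAt_divSinhDeriv {u : ℝ} (hu : u ≠ 0) :
    HasDerivAt divSinhDeriv (divSinhDeriv2 u) u := by
  have hs : sinh u ≠ 0 := sinh_ne_zero.2 hu
  refine (((hasDerivAt_sinh u).fun_sub ((hasDerivAt_id u).fun_mul (hasDerivAt_cosh u))).fun_div
    ((hasDerivAt_sinh u).fun_pow 2) (pow_ne_zero 2 hs)).congr_deriv ?_
  simp only [divSinhDeriv2, id]
  field_simp
  ring

theorem abs_divSinhDeriv_le {u : ℝ} (hu : 0 < u) : |divSinhDeriv u| ≤ 3 * u / (6 + u ^ 2) := by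
  have hs : 0 < sinh u := sinh_pos_iff.2 hu
  have hsinh := add_pow_three_div_six_le_sinh hu.le
  rw [divSinhDeriv, abs_div, abs_of_nonpos (by linarith [sinh_le_mul_cosh hu.le]),
    abs_of_pos (by positivity)]
  calc -(sinh u - u * cosh u) / sinh u ^ 2 ≤ u ^ 2 / 2 * sinh u / sinh u ^ 2 := by
        gcongr; linarith [mul_cosh_sub_sinh_le hu.le]
    _ = u ^ 2 / (2 * sinh u) := by field_simp
    _ ≤ 3 * u / (6 + u ^ 2) := by
        rw [div_le_div_iff₀ (by positivity) (by positivity)]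
        nlinarith [mul_le_mul_of_nonneg_left hsinh (by positivity : 0 ≤ 6 * u)]

theorem divSinhDeriv2_numerator_le {u : ℝ} (hu : 0 ≤ u) :
    2 * u * cosh u ^ 2 - u * sinh u ^ 2 - 2 * sinh u * cosh u ≤ sinh u ^ 3 / 3 := by
  have h2u := add_pow_three_div_six_le_sinh (mul_nonneg zero_le_two hu)
  rw [sinh_two_mul] at h2u
  -- after `cosh² = 1 + sinh²` and `h2u`, the slack is `(sinh u + u) (sinh u - 2u)² / 3`
  have hsq : 0 ≤ (sinh u + u) * (sinh u - 2 * u) ^ 2 :=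
    mul_nonneg (by linarith [self_le_sinh_iff.2 hu]) (sq_nonneg _)
  rw [cosh_sq]
  nlinarith

theorem neg_le_divSinhDeriv2_numerator {u : ℝ} (hu : 0 ≤ u) :
    -(sinh u ^ 3 / 3) ≤ 2 * u * cosh u ^ 2 - u * sinh u ^ 2 - 2 * sinh u * cosh u := by
  have := nonneg_of_hasDerivAt_nonneg
    (F := fun x ↦ sinh x ^ 3 / 3 + (2 * x * cosh x ^ 2 - x * sinh x ^ 2 - 2 * sinh x * cosh x))
    (F' := fun x ↦ sinh x * (sinh x * (cosh x - 1) + 2 * (x * cosh x - sinh x)))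
    (fun x ↦ by
      refine ((((hasDerivAt_sinh x).fun_pow 3).div_const 3).fun_add
        ((((hasDerivAt_id x).const_mul 2).fun_mul ((hasDerivAt_cosh x).fun_pow 2)).fun_sub
          ((hasDerivAt_id x).fun_mul ((hasDerivAt_sinh x).fun_pow 2)) |>.fun_sub
          (((hasDerivAt_sinh x).const_mul 2).fun_mul (hasDerivAt_cosh x)))).congr_deriv ?_
      simp only [id]
      ring)
    (by simp)
    (fun x hx ↦ mul_nonneg (sinh_nonneg_iff.2 hx) (add_nonneg
      (mul_nonneg (sinh_nonneg_iff.2 hx) (by linarith [one_le_cosh x]))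
      (by linarith [sinh_le_mul_cosh hx]))) hu
  linarith

theorem abs_divSinhDeriv2_le {u : ℝ} (hu : 0 < u) : |divSinhDeriv2 u| ≤ 1 / 3 := by
  have hs : 0 < sinh u ^ 3 := pow_pos (sinh_pos_iff.2 hu) 3
  rw [divSinhDeriv2, abs_div, abs_of_pos hs, div_le_iff₀ hs, abs_le]
  constructor
  · linarith [neg_le_divSinhDeriv2_numerator hu.le]
  · linarith [divSinhDeriv2_numerator_le hu.le]

theorem hasDerivAt_pi_mul_div_two (x : ℝ) : HasDerivAt (fun x : ℝ ↦ π * x / 2) (π / 2) x := by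
  simpa using ((hasDerivAt_id x).const_mul π).div_const 2

theorem hasDerivAt_melnikov {x : ℝ} (hx : x ≠ 0) :
    HasDerivAt (fun x : ℝ ↦ 2 * π * x / sinh (π * x / 2))
      (2 * π * divSinhDeriv (π * x / 2)) x := by
  have hrescale : (fun x : ℝ ↦ 2 * π * x / sinh (π * x / 2))
      = fun x ↦ 4 * ((π * x / 2) / sinh (π * x / 2)) := by
    funext x; ring
  rw [hrescale]
  refine (((hasDerivAt_div_sinh (by positivity)).comp x
    (hasDerivAt_pi_mul_div_two x)).const_mul 4).congr_deriv ?_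
  ring

theorem deriv_deriv_melnikov {x : ℝ} (hx : x ≠ 0) :
    deriv (deriv fun x : ℝ ↦ 2 * π * x / sinh (π * x / 2)) x
      = π ^ 2 * divSinhDeriv2 (π * x / 2) := by
  have hderiv : deriv (fun x : ℝ ↦ 2 * π * x / sinh (π * x / 2))
      =ᶠ[nhds x] fun x ↦ 2 * π * divSinhDeriv (π * x / 2) :=
    (eventually_ne_nhds hx).mono fun y hy ↦ (hasDerivAt_melnikov hy).deriv
  rw [hderiv.deriv_eq]
  refine (((hasDerivAt_divSinhDeriv (by positivity)).comp x
    (hasDerivAt_pi_mul_div_two x)).const_mul (2 * π)).deriv.trans ?_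
  ring

end Melnikov

open Melnikov in
/-- The Melnikov function M(ω) = 2πω / sinh(πω/2) satisfies |M'(ω)| ≤ 4 and |M''(ω)| ≤ 7/2
for every ω ∈ (0,1]. -/
theorem melnikov_deriv_bounds (ω : ℝ) (hω : ω ∈ Set.Ioc (0:ℝ) 1) :
    |deriv (fun x : ℝ => 2 * π * x / Real.sinh (π * x / 2)) ω| ≤ 4 ∧
    |deriv (deriv (fun x : ℝ => 2 * π * x / Real.sinh (π * x / 2))) ω| ≤ 7/2 := by
  obtain ⟨hω0, -⟩ := hω
  rw [(hasDerivAt_melnikov hω0.ne').deriv, deriv_deriv_melnikov hω0.ne', abs_mul (2 * π),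
    abs_mul (π ^ 2), abs_of_pos (by positivity : 0 < 2 * π), abs_of_pos (by positivity : 0 < π ^ 2)]
  set u := π * ω / 2
  have hu : 0 < u := by positivity
  constructor
  · calc 2 * π * |divSinhDeriv u| ≤ 2 * π * (3 * u / (6 + u ^ 2)) := by
          gcongr; exact abs_divSinhDeriv_le hu
      _ ≤ 4 := by
          rw [← mul_div_assoc, div_le_iff₀ (by positivity)]
          -- `4u² - 6πu + 24` has discriminant `36π² - 384 < 0`
          nlinarith [sq_nonneg (u - 3 * π / 4), pi_lt_d2, pi_pos]
  · calc π ^ 2 * |divSinhDeriv2 u| ≤ π ^ 2 * (1 / 3) := by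
          gcongr; exact abs_divSinhDeriv2_le hu
      _ ≤ 7 / 2 := by nlinarith [pi_lt_d2, pi_pos]
end

section
/- Let g ∈ (0,2) and δ₁ > g/2. Set s := √(4−g²), θ := arctan(s/g), θ₁ := arctan(s/(2δ₁−g)), and define recursively δ_{r+1} := g − 1/δ_r. Let n ≥ 1 and suppose sin(jθ + θ₁) ≠ 0 for every integer 0 ≤ j ≤ n. Then δ_r ≠ 0 for 1 ≤ r ≤ n (so the recursion is well defined) and δ_r = (1/2)·[ g + s·cot((r−1)θ + θ₁) ] for every 1 ≤ r ≤ n. -/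
open Real

/-- Closed-form solution (eq:soldiscr) of the Sturm ratio recurrence δ_{r+1} = g − 1/δ_r with
g ∈ (0,2) and δ₁ > g/2: with s = √(4−g²), θ = arctan(s/g), θ₁ = arctan(s/(2δ₁−g)), if
sin(jθ+θ₁) ≠ 0 for all 0 ≤ j ≤ n, then δ_r ≠ 0 and
δ_r = ½·(g + s·cot((r−1)θ + θ₁)) for every 1 ≤ r ≤ n. -/
theorem sturm_ratio_closed_form (g δ₁ : ℝ) (hg : g ∈ Set.Ioo (0:ℝ) 2) (hδ₁ : g / 2 < δ₁)
    (n : ℕ) (hn : 1 ≤ n) (δ : ℕ → ℝ)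
    (hδ1 : δ 1 = δ₁)
    (hrec : ∀ r, 1 ≤ r → r + 1 ≤ n → δ (r + 1) = g - 1 / δ r)
    (hsin : ∀ j : ℕ, j ≤ n →
      Real.sin ((j : ℝ) * Real.arctan (Real.sqrt (4 - g ^ 2) / g) +
        Real.arctan (Real.sqrt (4 - g ^ 2) / (2 * δ₁ - g))) ≠ 0) :
    ∀ r, 1 ≤ r → r ≤ n →
      δ r ≠ 0 ∧
      δ r = (1/2) * (g + Real.sqrt (4 - g ^ 2) *
        (Real.cos (((r : ℝ) - 1) * Real.arctan (Real.sqrt (4 - g ^ 2) / g) +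
            Real.arctan (Real.sqrt (4 - g ^ 2) / (2 * δ₁ - g))) /
          Real.sin (((r : ℝ) - 1) * Real.arctan (Real.sqrt (4 - g ^ 2) / g) +
            Real.arctan (Real.sqrt (4 - g ^ 2) / (2 * δ₁ - g))))) := by
  obtain ⟨hg0, hg2⟩ := hg
  set s := Real.sqrt (4 - g ^ 2) with hs_def
  have h4g : (0:ℝ) < 4 - g ^ 2 := by nlinarith
  have hs2 : s ^ 2 = 4 - g ^ 2 := Real.sq_sqrt h4g.le
  have hs : 0 < s := Real.sqrt_pos.mpr h4g
  set θ := Real.arctan (s / g) with hθ_def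
  set θ₁ := Real.arctan (s / (2 * δ₁ - g)) with hθ₁_def
  have hd : 0 < 2 * δ₁ - g := by linarith
  -- cos θ and sin θ
  have hsq : Real.sqrt (1 + (s / g) ^ 2) = 2 / g := by
    rw [show 1 + (s / g) ^ 2 = (2 / g) ^ 2 by field_simp; nlinarith [hs2]]
    exact Real.sqrt_sq (by positivity)
  have hcosθ : Real.cos θ = g / 2 := by
    rw [hθ_def, Real.cos_arctan, hsq]; field_simp
  have hsinθ : Real.sin θ = s / 2 := by
    rw [hθ_def, Real.sin_arctan, hsq]; field_simp
  -- tan θ₁ and cos θ₁ ≠ 0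
  have hcosθ₁ : 0 < Real.cos θ₁ := Real.cos_arctan_pos _
  have htanθ₁ : Real.sin θ₁ = (s / (2 * δ₁ - g)) * Real.cos θ₁ := by
    have := Real.tan_arctan (s / (2 * δ₁ - g))
    rw [Real.tan_eq_sin_div_cos] at this
    field_simp at this ⊢
    linarith [this]
  -- main induction: δ r = sin(rθ+θ₁)/sin((r-1)θ+θ₁)
  have key : ∀ r : ℕ, 1 ≤ r → r ≤ n →
      δ r = Real.sin ((r:ℝ) * θ + θ₁) / Real.sin (((r:ℝ) - 1) * θ + θ₁) := by
    intro r hr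
    induction r, hr using Nat.le_induction with
    | base =>
      intro _
      have h0 : Real.sin θ₁ ≠ 0 := by
        have := hsin 0 (by omega); simpa using this
      rw [hδ1]
      have e1 : (((1:ℕ):ℝ)) * θ + θ₁ = θ + θ₁ := by push_cast; ring
      have e2 : (((1:ℕ):ℝ) - 1) * θ + θ₁ = θ₁ := by push_cast; ring
      rw [e1, e2, Real.sin_add, hsinθ, hcosθ, htanθ₁]
      rw [htanθ₁] at h0
      field_simp at h0 ⊢
      ring
    | succ r hr ih =>
      intro hrn
      have hrn' : r ≤ n := by omega
      have ihr := ih hrn'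
      have ha : Real.sin (((r:ℝ) - 1) * θ + θ₁) ≠ 0 := by
        have := hsin (r - 1) (by omega)
        have hc : ((r - 1 : ℕ) : ℝ) = (r:ℝ) - 1 := by
          push_cast [Nat.cast_sub hr]; ring
        rwa [hc] at this
      have hb : Real.sin ((r:ℝ) * θ + θ₁) ≠ 0 := hsin r hrn'
      have hδr : δ r ≠ 0 := by
        rw [ihr]; exact div_ne_zero hb ha
      rw [hrec r hr hrn, ihr]
      have hab : ((r:ℝ) - 1) * θ + θ₁ = ((r:ℝ) * θ + θ₁) - θ := by ring
      have hcb : (((r:ℕ)+1:ℕ):ℝ) * θ + θ₁ = ((r:ℝ) * θ + θ₁) + θ := by push_cast; ring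
      have hcb2 : ((((r:ℕ)+1:ℕ):ℝ) - 1) * θ + θ₁ = (r:ℝ) * θ + θ₁ := by push_cast; ring
      have e1 : Real.sin (((r:ℝ) - 1) * θ + θ₁)
          = Real.sin ((r:ℝ) * θ + θ₁) * (g / 2) - Real.cos ((r:ℝ) * θ + θ₁) * (s / 2) := by
        rw [hab, Real.sin_sub, hcosθ, hsinθ]
      have e2 : Real.sin ((((r:ℝ) * θ + θ₁)) + θ)
          = Real.sin ((r:ℝ) * θ + θ₁) * (g / 2) + Real.cos ((r:ℝ) * θ + θ₁) * (s / 2) := by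
        rw [Real.sin_add, hcosθ, hsinθ]
      rw [hcb, hcb2, e2, e1]
      rw [e1] at ha
      field_simp
      ring
  intro r hr hrn
  have hkey := key r hr hrn
  have ha : Real.sin (((r:ℝ) - 1) * θ + θ₁) ≠ 0 := by
    have := hsin (r - 1) (by omega)
    have hc : ((r - 1 : ℕ) : ℝ) = (r:ℝ) - 1 := by
      push_cast [Nat.cast_sub hr]; ring
    rwa [hc] at this
  have hb : Real.sin ((r:ℝ) * θ + θ₁) ≠ 0 := hsin r hrn
  refine ⟨by rw [hkey]; exact div_ne_zero hb ha, ?_⟩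
  rw [hkey]
  have hab : (r:ℝ) * θ + θ₁ = (((r:ℝ) - 1) * θ + θ₁) + θ := by ring
  rw [hab, Real.sin_add, hcosθ, hsinθ]
  field_simp
end

section
/- Let Δ ≥ 3π, let ñ ∈ ℕ with h := Δ/(ñ+1) ≤ 0.01, and let k ∈ (0,1) satisfy 2kK(k) = Δ. Let T denote the ñ×ñ symmetric tridiagonal matrix with 2 on the main diagonal and −1 on the sub- and super-diagonals, let D := diag(cos(π + 2·am(k⁻¹·r·h, k)))_{r=1,…,ñ}, and let J₀ be the 2ñ×2ñ block-diagonal matrix diag(T + h²D, T). Then every eigenvalue of J₀ is at least (3π/(4Δ))²·h²; in particular J₀ is positive definite. -/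
open Real MeasureTheory intervalIntegral
/-- `am` is the Jacobi amplitude function: for every modulus k ∈ (0,1) and every u ∈ ℝ,
∫₀^{am(u,k)} (1 − k² sin²x)^{−1/2} dx = u. -/
def IsJacobiAm (am : ℝ → ℝ → ℝ) : Prop :=
  ∀ k ∈ Set.Ioo (0:ℝ) 1, ∀ u : ℝ,
    (∫ x in (0:ℝ)..(am u k), 1 / Real.sqrt (1 - k ^ 2 * Real.sin x ^ 2)) = u

/-- The nt×nt symmetric tridiagonal matrix with 2 on the main diagonal and −1 on the
sub- and super-diagonals. -/
def tridT (n : ℕ) : Matrix (Fin n) (Fin n) ℝ :=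
  Matrix.of fun i j =>
    if i = j then 2 else if (i : ℕ) + 1 = (j : ℕ) ∨ (j : ℕ) + 1 = (i : ℕ) then -1 else 0

open Matrix Finset

/-!
Both diagonal blocks of `J₀` are tridiagonal, and a tridiagonal matrix `tridiag d` satisfies
`μ ‖x‖² ≤ xᵀ (tridiag d) x` as soon as some `W > 0` on the grid `0, …, n + 1` is a discrete
supersolution, `W i + W (i + 2) ≤ (d i - μ) W (i + 1)`: weighted AM-GM on each off-diagonal
product does the rest. For `T` the parabola `(m + 1) (n + 2 - m)` is such a `W`. For `T + h²D`
the diagonal entry `cos (π + 2 am u)` equals `2 sin² (am u) - 1`. Comparing the elliptic integral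
with `∫ sec = artanh ∘ sin` gives `sin (am u) ≥ 3/4`, so the entry is at least `1/8` at
distance at least `1` from both ends of `[0, Δ]`; it is at least `-1` everywhere. A profile
which is a concave parabola near either end and constant in the middle is then a supersolution.
-/

section QuadraticFormBound

variable {ι κ : Type*} [Fintype ι] [Fintype κ]

lemma dotProduct_self_pos {v : ι → ℝ} (hv : v ≠ 0) : 0 < v ⬝ᵥ v :=
  (Finset.sum_nonneg fun i _ => mul_self_nonneg (v i)).lt_of_ne
    (Ne.symm (dotProduct_self_eq_zero.not.2 hv))

lemma mul_dotProduct_self_le_fromBlocks_mulVec {μ : ℝ} {A : Matrix ι ι ℝ} {B : Matrix κ κ ℝ}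
    (hA : ∀ x, μ * (x ⬝ᵥ x) ≤ x ⬝ᵥ (A *ᵥ x)) (hB : ∀ x, μ * (x ⬝ᵥ x) ≤ x ⬝ᵥ (B *ᵥ x))
    (x : ι ⊕ κ → ℝ) : μ * (x ⬝ᵥ x) ≤ x ⬝ᵥ (fromBlocks A 0 0 B *ᵥ x) := by
  rw [← Sum.elim_comp_inl_inr x, fromBlocks_mulVec]
  simp only [zero_mulVec, add_zero, zero_add, dotProduct, Fintype.sum_sum_type, Sum.elim_inl,
    Sum.elim_inr, mul_add]
  exact add_le_add (hA _) (hB _)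

lemma le_of_mem_spectrum_of_forall_mul_dotProduct_self_le [DecidableEq ι] {μ lam : ℝ}
    {A : Matrix ι ι ℝ}
    (hA : ∀ x, μ * (x ⬝ᵥ x) ≤ x ⬝ᵥ (A *ᵥ x)) (hlam : lam ∈ spectrum ℝ A) : μ ≤ lam := by
  rw [← spectrum_toLin', ← Module.End.hasEigenvalue_iff_mem_spectrum] at hlam
  obtain ⟨v, hv⟩ := hlam.exists_hasEigenvector
  have hAv : A *ᵥ v = lam • v := by simpa using hv.apply_eq_smul
  have := hA v
  rw [hAv, dotProduct_smul, smul_eq_mul] at this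
  exact le_of_mul_le_mul_right this (dotProduct_self_pos hv.2)

lemma posDef_of_forall_mul_dotProduct_self_le {μ : ℝ} {A : Matrix ι ι ℝ} (hA : A.IsHermitian)
    (hμ : 0 < μ) (hAμ : ∀ x, μ * (x ⬝ᵥ x) ≤ x ⬝ᵥ (A *ᵥ x)) : A.PosDef :=
  posDef_iff_dotProduct_mulVec.2 ⟨hA, fun x hx => by
    simpa using (mul_pos hμ (dotProduct_self_pos hx)).trans_le (hAμ x)⟩

end QuadraticFormBound

def upShift (n : ℕ) : Matrix (Fin n) (Fin n) ℝ :=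
  of fun i j => if (i : ℕ) + 1 = j then 1 else 0

def tridiag {n : ℕ} (d : Fin n → ℝ) : Matrix (Fin n) (Fin n) ℝ :=
  diagonal d - (upShift n + (upShift n)ᵀ)

lemma tridT_add_diagonal (n : ℕ) (c : Fin n → ℝ) :
    tridT n + diagonal c = tridiag fun i => 2 + c i := by
  ext i j
  simp only [tridT, tridiag, upShift, Matrix.add_apply, Matrix.sub_apply, diagonal_apply,
    transpose_apply, of_apply]
  by_cases hij : i = j
  · subst hij; simp
  · have hij' : (i : ℕ) ≠ j := fun h => hij (Fin.ext h)
    by_cases h1 : (i : ℕ) + 1 = j <;> by_cases h2 : (j : ℕ) + 1 = i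
    all_goals simp [hij, h1, h2]; try omega

lemma tridT_eq_tridiag (n : ℕ) : tridT n = tridiag fun _ => 2 := by
  simpa using tridT_add_diagonal n 0

lemma isHermitian_tridiag {n : ℕ} (d : Fin n → ℝ) : (tridiag d).IsHermitian :=
  (isHermitian_diagonal d).sub (isHermitian_add_transpose_self _)

lemma upShift_mulVec {n : ℕ} (x : Fin n → ℝ) (i : Fin n) :
    (upShift n *ᵥ x) i = Function.extend Fin.val x 0 (i + 1) := by
  simp only [upShift, mulVec, dotProduct, of_apply, ite_mul, one_mul, zero_mul]
  by_cases hi : (i : ℕ) + 1 < n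
  · rw [sum_eq_single ⟨_, hi⟩ (fun j _ hj => if_neg fun h => hj (Fin.ext h.symm)) (by simp)]
    exact (if_pos rfl).trans (Fin.val_injective.extend_apply x 0 ⟨_, hi⟩).symm
  · rw [Function.extend_apply' _ _ _ fun ⟨j, hj⟩ => hi (hj ▸ j.isLt)]
    exact sum_eq_zero fun j _ => if_neg fun (h : (i : ℕ) + 1 = j) => hi (h ▸ j.isLt)

lemma dotProduct_upShift_mulVec {n : ℕ} (x : Fin n → ℝ) :
    x ⬝ᵥ (upShift n *ᵥ x) =
      ∑ i ∈ range n, Function.extend Fin.val x 0 i * Function.extend Fin.val x 0 (i + 1) := by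
  rw [dotProduct, ← Fin.sum_univ_eq_sum_range
    (fun i => Function.extend Fin.val x 0 i * Function.extend Fin.val x 0 (i + 1))]
  simp [upShift_mulVec, Fin.val_injective.extend_apply]

lemma dotProduct_tridiag_mulVec {n : ℕ} (d x : Fin n → ℝ) :
    x ⬝ᵥ (tridiag d *ᵥ x) = ∑ i, d i * x i ^ 2 - 2 * (x ⬝ᵥ (upShift n *ᵥ x)) := by
  rw [tridiag, sub_mulVec, add_mulVec, dotProduct_sub, dotProduct_add, mulVec_transpose,
    dotProduct_comm x (x ᵥ* _), ← dotProduct_mulVec]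
  simp [dotProduct, mulVec_diagonal, two_mul, sq, mul_left_comm]

lemma two_mul_mul_le_div_mul_sq_add_div_mul_sq {a b α β : ℝ} (hα : 0 < α) (hβ : 0 < β) :
    2 * (a * b) ≤ β / α * a ^ 2 + α / β * b ^ 2 := by
  rw [div_mul_eq_mul_div, div_mul_eq_mul_div, div_add_div _ _ hα.ne' hβ.ne',
    le_div_iff₀ (by positivity)]
  nlinarith [sq_nonneg (β * a - α * b)]

lemma two_mul_sum_range_mul_succ_le {n : ℕ} {y : ℕ → ℝ} (W : ℕ → ℝ) (hy : y n = 0)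
    (hW : ∀ m ≤ n + 1, 0 < W m) :
    2 * ∑ i ∈ range n, y i * y (i + 1) ≤
      ∑ i ∈ range n, (W i + W (i + 2)) / W (i + 1) * y i ^ 2 := by
  set f : ℕ → ℝ := fun i => W i / W (i + 1) * y i ^ 2
  have hpair : ∀ i ∈ range n,
      2 * (y i * y (i + 1)) ≤ W (i + 2) / W (i + 1) * y i ^ 2 + f (i + 1) := fun i hi => by
    rw [mem_range] at hi
    exact two_mul_mul_le_div_mul_sq_add_div_mul_sq (hW _ (by omega)) (hW _ (by omega))
  have hshift : ∑ i ∈ range n, f (i + 1) ≤ ∑ i ∈ range n, f i := by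
    have hf0 : 0 ≤ f 0 :=
      mul_nonneg (div_nonneg (hW 0 (by omega)).le (hW 1 (by omega)).le) (sq_nonneg _)
    have hfn : f n = 0 := by simp [f, hy]
    linarith [sum_range_succ' f n, sum_range_succ f n]
  calc 2 * ∑ i ∈ range n, y i * y (i + 1)
      ≤ ∑ i ∈ range n, (W (i + 2) / W (i + 1) * y i ^ 2 + f (i + 1)) := by
        rw [mul_sum]; exact sum_le_sum hpair
    _ ≤ ∑ i ∈ range n, W (i + 2) / W (i + 1) * y i ^ 2 + ∑ i ∈ range n, f i := by
        rw [sum_add_distrib]; gcongr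
    _ = ∑ i ∈ range n, (W i + W (i + 2)) / W (i + 1) * y i ^ 2 := by
        rw [← sum_add_distrib]; exact sum_congr rfl fun i _ => by simp only [f]; ring

/-- `x i` sits at node `i + 1` of the grid `0, …, n + 1`; `W 0` and `W (n + 1)` are the boundary
nodes. -/
theorem mul_dotProduct_self_le_dotProduct_tridiag_mulVec {n : ℕ} (d : Fin n → ℝ) {μ : ℝ}
    (W : ℕ → ℝ) (hW : ∀ m ≤ n + 1, 0 < W m)
    (hsuper : ∀ i : Fin n, W i + W (i + 2) ≤ (d i - μ) * W (i + 1)) (x : Fin n → ℝ) :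
    μ * (x ⬝ᵥ x) ≤ x ⬝ᵥ (tridiag d *ᵥ x) := by
  have hcross := two_mul_sum_range_mul_succ_le (y := Function.extend Fin.val x 0) W
    (Function.extend_apply' _ _ _ fun ⟨j, hj⟩ => (hj ▸ j.isLt).false) hW
  rw [← Fin.sum_univ_eq_sum_range
    (fun i => (W i + W (i + 2)) / W (i + 1) * Function.extend Fin.val x 0 i ^ 2)] at hcross
  simp only [Fin.val_injective.extend_apply] at hcross
  have hdiag : ∑ i : Fin n, (W i + W (i + 2)) / W (i + 1) * x i ^ 2 ≤ ∑ i, (d i - μ) * x i ^ 2 :=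
    sum_le_sum fun i _ => mul_le_mul_of_nonneg_right
      ((div_le_iff₀ (hW _ (by omega))).2 (hsuper i)) (sq_nonneg _)
  rw [dotProduct_tridiag_mulVec, dotProduct_upShift_mulVec]
  simp only [dotProduct, sub_mul, sum_sub_distrib, ← mul_sum, sq] at hcross hdiag ⊢
  linarith

theorem eight_div_sq_mul_dotProduct_self_le_dotProduct_tridT_mulVec (n : ℕ) (x : Fin n → ℝ) :
    8 / ((n : ℝ) + 3) ^ 2 * (x ⬝ᵥ x) ≤ x ⬝ᵥ (tridT n *ᵥ x) := by
  rw [tridT_eq_tridiag]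
  refine mul_dotProduct_self_le_dotProduct_tridiag_mulVec _
    (fun m => ((m : ℝ) + 1) * (n + 2 - m)) (fun m hm => ?_) (fun i => ?_) x
  · have : (m : ℝ) ≤ n + 1 := by exact_mod_cast hm
    nlinarith
  · have hN : (0 : ℝ) < (n + 3) ^ 2 := by positivity
    have hamgm : 4 * (((i : ℝ) + 2) * (n + 1 - i)) ≤ ((n : ℝ) + 3) ^ 2 := by
      nlinarith [sq_nonneg ((i : ℝ) + 2 - (n + 1 - i))]
    push_cast
    rw [sub_mul, div_mul_eq_mul_div, le_sub_iff_add_le, ← le_sub_iff_add_le', div_le_iff₀ hN]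
    nlinarith

/-- A parabola capped at `s = 1`, with vertex `11/10` beyond the cap so that it is still increasing
there. Below the cap its second difference is `-2h²`; as the profile stays below `3/2`, this beats
the loss `-(4/3) h²` coming from a diagonal coefficient `2 + h² (c - μ)` with `c ≥ -1`. -/
noncomputable def edgeProfile (s : ℝ) : ℝ := 3 / 2 - (11 / 10 - min s 1) ^ 2

lemma edgeProfile_le (s : ℝ) : edgeProfile s ≤ edgeProfile 1 := by
  have : min s 1 ≤ 1 := min_le_right s 1
  simp only [edgeProfile, min_self]
  nlinarith

lemma edgeProfile_pos {s : ℝ} (hs : 0 ≤ s) : 0 < edgeProfile s := by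
  have : 0 ≤ min s 1 := le_min hs zero_le_one
  have : min s 1 ≤ 1 := min_le_right s 1
  simp only [edgeProfile]
  nlinarith

lemma edgeProfile_mono : Monotone edgeProfile := by
  intro s t hst
  have : min s 1 ≤ min t 1 := min_le_min_right 1 hst
  have : min t 1 ≤ 1 := min_le_right t 1
  simp only [edgeProfile]
  nlinarith

lemma edgeProfile_sub_add_add_le {h t α : ℝ} (hh0 : 0 ≤ h) (hh : h ≤ 1 / 10) (ht : h ≤ t)
    (hα : 2 - 4 / 3 * h ^ 2 ≤ α) (hα' : 1 ≤ t → 2 ≤ α) :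
    edgeProfile (t - h) + edgeProfile (t + h) ≤ α * edgeProfile t := by
  rcases lt_or_ge t 1 with ht1 | ht1
  · have hplus : edgeProfile (t + h) ≤ 3 / 2 - (11 / 10 - (t + h)) ^ 2 := by
      simp only [edgeProfile]; nlinarith [min_le_left (t + h) 1, min_le_right (t + h) 1]
    have hq : 0 ≤ 3 / 2 - (11 / 10 - t) ^ 2 := by nlinarith
    have hαq := mul_le_mul_of_nonneg_right hα hq
    simp only [edgeProfile, min_eq_left ht1.le, min_eq_left (by linarith : t - h ≤ 1)] at hplus ⊢
    nlinarith
  · have hflat : edgeProfile t = edgeProfile 1 := by simp [edgeProfile, min_eq_right ht1]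
    nlinarith [hα' ht1, edgeProfile_le (t - h), edgeProfile_le (t + h),
      edgeProfile_pos zero_le_one]

noncomputable def twoSidedProfile (L s : ℝ) : ℝ := min (edgeProfile s) (edgeProfile (L - s))

lemma twoSidedProfile_sub (L s : ℝ) : twoSidedProfile L (L - s) = twoSidedProfile L s := by
  rw [twoSidedProfile, twoSidedProfile, sub_sub_cancel, min_comm]

lemma twoSidedProfile_sub_add_add_le {L h t α : ℝ} (hL : 2 ≤ L) (hh0 : 0 ≤ h) (hh : h ≤ 1 / 10)
    (ht : h ≤ t) (ht' : t ≤ L - h) (hα : 2 - 4 / 3 * h ^ 2 ≤ α)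
    (hα' : 1 ≤ t → t ≤ L - 1 → 2 ≤ α) :
    twoSidedProfile L (t - h) + twoSidedProfile L (t + h) ≤ α * twoSidedProfile L t := by
  wlog hle : t ≤ L - t generalizing t
  · have := this (t := L - t) (by linarith) (by linarith)
      (fun h1 h2 => hα' (by linarith) (by linarith)) (by linarith)
    rwa [show L - t - h = L - (t + h) by ring, show L - t + h = L - (t - h) by ring,
      twoSidedProfile_sub, twoSidedProfile_sub, twoSidedProfile_sub, add_comm] at this
  have := edgeProfile_sub_add_add_le hh0 hh ht hα fun h1 => hα' h1 (by linarith)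
  simp only [twoSidedProfile]
  rw [min_eq_left (edgeProfile_mono hle)]
  linarith [min_le_left (edgeProfile (t - h)) (edgeProfile (L - (t - h))),
    min_le_left (edgeProfile (t + h)) (edgeProfile (L - (t + h)))]

theorem mul_dotProduct_self_le_dotProduct_tridiag_two_add_mulVec {n : ℕ} {h μ : ℝ}
    (c : Fin n → ℝ) (hh0 : 0 < h) (hh : h ≤ 1 / 10) (hL : 2 ≤ (n + 1) * h) (hμ : μ ≤ 1 / 3)
    (hc : ∀ i, -1 ≤ c i)
    (hc' : ∀ i : Fin n, 1 ≤ ((i : ℝ) + 1) * h → ((i : ℝ) + 1) * h ≤ (n + 1) * h - 1 → μ ≤ c i)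
    (x : Fin n → ℝ) :
    μ * h ^ 2 * (x ⬝ᵥ x) ≤ x ⬝ᵥ (tridiag (fun i => 2 + h ^ 2 * c i) *ᵥ x) := by
  set L := ((n : ℝ) + 1) * h
  refine mul_dotProduct_self_le_dotProduct_tridiag_mulVec _
    (fun m => twoSidedProfile L (m * h)) (fun m hm => ?_) (fun i => ?_) x
  · have : (m : ℝ) ≤ n + 1 := by exact_mod_cast hm
    exact lt_min (edgeProfile_pos (by positivity)) (edgeProfile_pos (by nlinarith))
  · have hi : ((i : ℝ) + 1) ≤ n := by exact_mod_cast i.isLt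
    have := twoSidedProfile_sub_add_add_le (t := ((i : ℝ) + 1) * h) (α := 2 + h ^ 2 * (c i - μ))
      hL hh0.le hh (by nlinarith) (by nlinarith) (by nlinarith [hc i])
      fun h1 h2 => by nlinarith [hc' i h1 h2]
    rw [show ((i : ℝ) + 1) * h - h = i * h by ring,
      show ((i : ℝ) + 1) * h + h = (i + 2) * h by ring] at this
    push_cast
    exact this.trans_eq (by ring)

/-- The incomplete elliptic integral of the first kind: `ellK k = ellF k (π / 2)`, and
`IsJacobiAm am` says `ellF k (am u k) = u`, both by definition. -/
noncomputable def ellF (k φ : ℝ) : ℝ :=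
  ∫ x in (0 : ℝ)..φ, 1 / √(1 - k ^ 2 * sin x ^ 2)

section EllipticF

variable {k : ℝ}

lemma one_sub_sq_mul_sin_sq_pos (hk : k ^ 2 < 1) (x : ℝ) : 0 < 1 - k ^ 2 * sin x ^ 2 := by
  nlinarith [sin_sq_le_one x, sq_nonneg k]

lemma continuous_ellIntegrand (hk : k ^ 2 < 1) :
    Continuous fun x => 1 / √(1 - k ^ 2 * sin x ^ 2) :=
  continuous_const.div (by fun_prop) fun x => (sqrt_pos.2 (one_sub_sq_mul_sin_sq_pos hk x)).ne'

lemma ellF_add_integral (hk : k ^ 2 < 1) (a b : ℝ) :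
    ellF k a + ∫ x in a..b, 1 / √(1 - k ^ 2 * sin x ^ 2) = ellF k b :=
  integral_add_adjacent_intervals ((continuous_ellIntegrand hk).intervalIntegrable _ _)
    ((continuous_ellIntegrand hk).intervalIntegrable _ _)

lemma ellF_strictMono (hk : k ^ 2 < 1) : StrictMono (ellF k) := fun a b hab => by
  have := intervalIntegral_pos_of_pos_on ((continuous_ellIntegrand hk).intervalIntegrable a b)
    (fun x _ => one_div_pos.2 (sqrt_pos.2 (one_sub_sq_mul_sin_sq_pos hk x))) hab
  linarith [ellF_add_integral hk a b]

lemma ellF_zero : ellF k 0 = 0 := integral_same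

lemma integral_ellIntegrand_pi_sub (a b : ℝ) :
    ∫ x in (π - b)..(π - a), 1 / √(1 - k ^ 2 * sin x ^ 2) =
      ∫ x in a..b, 1 / √(1 - k ^ 2 * sin x ^ 2) := by
  rw [← integral_comp_sub_left]
  simp only [sin_pi_sub]

lemma ellF_pi_sub (hk : k ^ 2 < 1) (φ : ℝ) : ellF k (π - φ) = 2 * ellK k - ellF k φ := by
  have hK := integral_ellIntegrand_pi_sub (k := k) 0 (π / 2)
  have hφ := integral_ellIntegrand_pi_sub (k := k) 0 φ
  rw [sub_zero, show π - π / 2 = π / 2 by ring] at hK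
  rw [sub_zero] at hφ
  have := ellF_add_integral hk (π / 2) π
  have := ellF_add_integral hk (π - φ) π
  simp only [ellK, ellF] at *
  linarith

lemma hasDerivAt_artanh {x : ℝ} (hx : x ∈ Set.Ioo (-1) 1) :
    HasDerivAt artanh (1 / (1 - x ^ 2)) x := by
  obtain ⟨hx1, hx2⟩ := hx
  have hq : 0 < (1 + x) / (1 - x) := div_pos (by linarith) (by linarith)
  have h := ((((hasDerivAt_id x).const_add 1).div ((hasDerivAt_id x).const_sub 1)
    (by simp; linarith)).sqrt hq.ne').log (sqrt_pos.2 hq).ne'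
  convert h using 1
  · rfl
  · simp only [id, Pi.div_apply]
    rw [div_div, mul_assoc, mul_self_sqrt hq.le]
    have : 1 - x ≠ 0 := by linarith
    have : 1 + x ≠ 0 := by linarith
    have : 1 - x ^ 2 ≠ 0 := by nlinarith
    field_simp
    ring

lemma hasDerivAt_artanh_sin {x : ℝ} (hx : 0 < cos x) :
    HasDerivAt (fun y => artanh (sin y)) (1 / cos x) x := by
  have hsin : sin x ^ 2 < 1 := by nlinarith [sin_sq_add_cos_sq x]
  refine ((hasDerivAt_artanh ⟨by nlinarith, by nlinarith⟩).comp x (hasDerivAt_sin x)).congr_deriv ?_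
  rw [← cos_sq', div_mul_eq_mul_div, one_mul, sq, div_mul_cancel_right₀ hx.ne', one_div]

lemma ellF_le_artanh_sin (hk : k ^ 2 < 1) {φ : ℝ} (hφ0 : 0 ≤ φ) (hφ : φ < π / 2) :
    ellF k φ ≤ artanh (sin φ) := by
  have hcos : ∀ x ∈ Set.Icc 0 φ, 0 < cos x := fun x hx =>
    cos_pos_of_mem_Ioo ⟨by linarith [pi_pos, hx.1], by linarith [hx.2]⟩
  have hsec : ∫ x in (0 : ℝ)..φ, 1 / cos x = artanh (sin φ) := by
    rw [integral_eq_sub_of_hasDerivAt (f := fun y => artanh (sin y))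
      (fun x hx => hasDerivAt_artanh_sin (hcos x (Set.uIcc_of_le hφ0 ▸ hx)))
      ((continuousOn_const.div continuous_cos.continuousOn fun x hx =>
        (hcos x (Set.uIcc_of_le hφ0 ▸ hx)).ne').intervalIntegrable)]
    simp
  rw [← hsec]
  refine integral_mono_on hφ0 ((continuous_ellIntegrand hk).intervalIntegrable _ _)
    ((continuousOn_const.div continuous_cos.continuousOn fun x hx =>
        (hcos x (Set.uIcc_of_le hφ0 ▸ hx)).ne').intervalIntegrable) fun x hx => ?_
  have hcx := hcos x hx
  refine one_div_le_one_div_of_le hcx ?_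
  rw [← sqrt_sq hcx.le]
  exact sqrt_le_sqrt (by nlinarith [sin_sq_add_cos_sq x, sq_nonneg (sin x)])

lemma three_quarters_le_sin_of_one_le_ellF (hk : k ^ 2 < 1) {φ : ℝ} (hφ0 : 0 ≤ φ)
    (hφ : φ ≤ π / 2) (h1 : 1 ≤ ellF k φ) : 3 / 4 ≤ sin φ := by
  by_contra! hsin
  have hφ' : φ < π / 2 := hφ.lt_of_ne fun h => by rw [h, sin_pi_div_two] at hsin; linarith
  have hsin0 : 0 ≤ sin φ := sin_nonneg_of_nonneg_of_le_pi hφ0 (by linarith [pi_pos])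
  have hlog7 : artanh (3 / 4) < 1 := by
    rw [artanh_eq_half_log ⟨by norm_num, by norm_num⟩]
    have : log 7 < 2 := by
      rw [log_lt_iff_lt_exp (by norm_num), show (2 : ℝ) = 1 + 1 by norm_num, exp_add]
      nlinarith [exp_one_gt_d9]
    norm_num
    linarith
  linarith [ellF_le_artanh_sin hk hφ0 hφ', artanh_lt_artanh (by linarith) (by norm_num) hsin]

lemma three_quarters_le_sin_of_one_le_ellF_le (hk : k ^ 2 < 1) {φ : ℝ} (hφ0 : 0 ≤ φ)
    (hφ : φ ≤ π) (h1 : 1 ≤ ellF k φ) (h2 : ellF k φ ≤ 2 * ellK k - 1) : 3 / 4 ≤ sin φ := by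
  rcases le_or_gt φ (π / 2) with hle | hgt
  · exact three_quarters_le_sin_of_one_le_ellF hk hφ0 hle h1
  · rw [← sin_pi_sub]
    exact three_quarters_le_sin_of_one_le_ellF hk (by linarith) (by linarith)
      (by rw [ellF_pi_sub hk]; linarith)

end EllipticF

lemma three_quarters_le_sin_am {am : ℝ → ℝ → ℝ} (ham : IsJacobiAm am) {k u : ℝ}
    (hk : k ∈ Set.Ioo (0 : ℝ) 1) (hu1 : 1 ≤ u) (hu2 : u ≤ 2 * ellK k - 1) :
    3 / 4 ≤ sin (am u k) := by
  have hk2 : k ^ 2 < 1 := by nlinarith [hk.1, hk.2]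
  have hF : ellF k (am u k) = u := ham k hk u
  have hpi : ellF k π = 2 * ellK k := by simpa [ellF_zero] using ellF_pi_sub hk2 0
  refine three_quarters_le_sin_of_one_le_ellF_le hk2 ?_ ?_ (by rwa [hF]) (by rwa [hF])
  · exact (ellF_strictMono hk2).le_iff_le.1 (by rw [hF, ellF_zero]; linarith)
  · exact (ellF_strictMono hk2).le_iff_le.1 (by rw [hF, hpi]; linarith)

lemma one_eighth_le_cos_pi_add_two_mul_am {am : ℝ → ℝ → ℝ} (ham : IsJacobiAm am) {k Δ t : ℝ}
    (hk : k ∈ Set.Ioo (0 : ℝ) 1) (hkΔ : 2 * k * ellK k = Δ) (ht1 : 1 ≤ t) (ht2 : t ≤ Δ - 1) :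
    1 / 8 ≤ cos (π + 2 * am (k⁻¹ * t) k) := by
  obtain ⟨hk0, hk1⟩ := hk
  have hkinv : 1 ≤ k⁻¹ := one_le_inv_iff₀.2 ⟨hk0, hk1.le⟩
  have h2K : 2 * ellK k = k⁻¹ * Δ := by rw [← hkΔ]; field_simp
  have hsin := three_quarters_le_sin_am ham ⟨hk0, hk1⟩ (u := k⁻¹ * t) (by nlinarith)
    (by rw [h2K]; nlinarith)
  rw [cos_add, cos_pi, sin_pi, cos_two_mul, cos_sq']
  nlinarith

lemma sq_three_pi_div_four_mul_le_eight_div_sq {n : ℕ} {h : ℝ} (hh : 0 < h)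
    (hn : 20 ≤ (n : ℝ) + 1) :
    (3 * π / (4 * ((n + 1) * h))) ^ 2 * h ^ 2 ≤ 8 / ((n : ℝ) + 3) ^ 2 := by
  have hπ : (3 * π) ^ 2 ≤ 90 := by nlinarith [pi_lt_d2, pi_pos]
  have hscale : 3 * π / (4 * ((n + 1) * h)) * h = 3 * π / (4 * ((n : ℝ) + 1)) := by
    field_simp
  rw [← mul_pow, hscale, div_pow, div_le_div_iff₀ (by positivity) (by positivity)]
  nlinarith [mul_le_mul_of_nonneg_right hπ (sq_nonneg ((n : ℝ) + 3))]

lemma sq_three_pi_div_four_mul_dotProduct_self_le_dotProduct_tridT_mulVec {n : ℕ} {h : ℝ}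
    (hh : 0 < h) (hn : 20 ≤ (n : ℝ) + 1) (x : Fin n → ℝ) :
    (3 * π / (4 * ((n + 1) * h))) ^ 2 * h ^ 2 * (x ⬝ᵥ x) ≤ x ⬝ᵥ (tridT n *ᵥ x) :=
  (mul_le_mul_of_nonneg_right (sq_three_pi_div_four_mul_le_eight_div_sq hh hn)
    (dotProduct_self_star_nonneg x)).trans
    (eight_div_sq_mul_dotProduct_self_le_dotProduct_tridT_mulVec n x)

/-- Positive definiteness of the Jacobian J₀ = diag(T + h²D, T) of the discrete
Euler–Lagrange map at the origin: every eigenvalue of J₀ is at least (3π/(4Δ))²h². -/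
theorem J0_positive_definite
    (am : ℝ → ℝ → ℝ) (ham : IsJacobiAm am)
    (Δ : ℝ) (hΔ : 3 * π ≤ Δ)
    (nt : ℕ) (h : ℝ) (hhdef : h = Δ / (nt + 1)) (hh : h ≤ 0.01)
    (k : ℝ) (hk : k ∈ Set.Ioo (0:ℝ) 1) (hkΔ : 2 * k * ellK k = Δ)
    (D : Matrix (Fin nt) (Fin nt) ℝ)
    (hD : D = Matrix.diagonal (fun r : Fin nt =>
      Real.cos (π + 2 * am (k⁻¹ * (((r : ℕ) : ℝ) + 1) * h) k)))
    (J₀ : Matrix (Fin nt ⊕ Fin nt) (Fin nt ⊕ Fin nt) ℝ)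
    (hJ : J₀ = Matrix.fromBlocks (tridT nt + h ^ 2 • D) 0 0 (tridT nt)) :
    (∀ lam ∈ spectrum ℝ J₀, (3 * π / (4 * Δ)) ^ 2 * h ^ 2 ≤ lam) ∧ J₀.PosDef := by
  have hΔ9 : 9 ≤ Δ := by nlinarith [pi_gt_three]
  have hh0 : 0 < h := by rw [hhdef]; positivity
  have hL : ((nt : ℝ) + 1) * h = Δ := by rw [hhdef]; field_simp
  have hh1 : h ≤ 1 / 100 := by norm_num at hh; linarith
  have hμ : (3 * π / (4 * Δ)) ^ 2 ≤ 1 / 16 := by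
    rw [div_pow, div_le_iff₀ (by positivity)]
    nlinarith [mul_self_le_mul_self (by positivity) hΔ]
  have hblockA : tridT nt + h ^ 2 • D =
      tridiag fun i => 2 + h ^ 2 * cos (π + 2 * am (k⁻¹ * (((i : ℕ) : ℝ) + 1) * h) k) := by
    rw [hD, ← diagonal_smul, tridT_add_diagonal]; rfl
  have hA : ∀ x, (3 * π / (4 * Δ)) ^ 2 * h ^ 2 * (x ⬝ᵥ x) ≤
      x ⬝ᵥ ((tridT nt + h ^ 2 • D) *ᵥ x) := by
    rw [hblockA]
    refine mul_dotProduct_self_le_dotProduct_tridiag_two_add_mulVec _ hh0 (by linarith)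
      (by linarith) (by linarith) (fun i => neg_one_le_cos _) fun i h1 h2 => ?_
    have := one_eighth_le_cos_pi_add_two_mul_am ham hk hkΔ h1 (by linarith)
    rw [← mul_assoc] at this
    linarith
  have hT := hL ▸ sq_three_pi_div_four_mul_dotProduct_self_le_dotProduct_tridT_mulVec (n := nt)
    hh0 (by nlinarith)
  have hJμ := mul_dotProduct_self_le_fromBlocks_mulVec hA hT
  rw [← hJ] at hJμ
  refine ⟨fun lam => le_of_mem_spectrum_of_forall_mul_dotProduct_self_le hJμ,
    posDef_of_forall_mul_dotProduct_self_le ?_ (by positivity) hJμ⟩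
  rw [hJ, hblockA, tridT_eq_tridiag]
  exact (isHermitian_tridiag _).fromBlocks (by simp) (isHermitian_tridiag _)
end

section
/- For every k ∈ (0,1) and every u ∈ (0, K(k)], the Jacobi elliptic sine satisfies sn(u,k) > tanh(u), i.e. sin(am(u,k)) > tanh(u). -/
open Real MeasureTheory intervalIntegral

lemma myTanh_eq (x : ℝ) :
    Real.tanh x = (Real.exp (2*x) - 1) / (Real.exp (2*x) + 1) := by
  rw [Real.tanh_eq_sinh_div_cosh, Real.sinh_eq, Real.cosh_eq]
  have h1 : Real.exp (2*x) = Real.exp x * Real.exp x := by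
    rw [← Real.exp_add]; ring_nf
  have h2 : Real.exp (-x) = (Real.exp x)⁻¹ := Real.exp_neg x
  have h3 : Real.exp x ≠ 0 := (Real.exp_pos x).ne'
  have h4 : Real.exp (2*x) + 1 > 0 := by positivity
  rw [h1, h2]
  field_simp

lemma myTanh_lt_one (x : ℝ) : Real.tanh x < 1 := by
  rw [myTanh_eq]
  have h : (0:ℝ) < Real.exp (2*x) + 1 := by positivity
  rw [div_lt_one h]; linarith

lemma myTanh_strictMono : StrictMono Real.tanh := by
  intro a b hab
  rw [myTanh_eq, myTanh_eq]
  have ha : (0:ℝ) < Real.exp (2*a) + 1 := by positivity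
  have hb : (0:ℝ) < Real.exp (2*b) + 1 := by positivity
  rw [div_lt_div_iff₀ ha hb]
  have : Real.exp (2*a) < Real.exp (2*b) := Real.exp_lt_exp.2 (by linarith)
  nlinarith

noncomputable def myArtanh (s : ℝ) : ℝ := Real.log ((1 + s) / (1 - s)) / 2

lemma myTanh_myArtanh {s : ℝ} (h1 : -1 < s) (h2 : s < 1) :
    Real.tanh (myArtanh s) = s := by
  have hp : (0:ℝ) < (1 + s) / (1 - s) := by
    apply div_pos <;> linarith
  rw [myTanh_eq, myArtanh]
  have : Real.exp (2 * (Real.log ((1 + s) / (1 - s)) / 2)) = (1 + s) / (1 - s) := by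
    rw [show 2 * (Real.log ((1 + s) / (1 - s)) / 2) = Real.log ((1 + s) / (1 - s)) by ring,
      Real.exp_log hp]
  rw [this]
  have h3 : (1:ℝ) - s ≠ 0 := by linarith
  field_simp
  ring


lemma myDeriv (x : ℝ) (hx1 : -1 < Real.sin x) (hx2 : Real.sin x < 1)
    (hc : 0 < Real.cos x) :
    HasDerivAt (fun t => myArtanh (Real.sin t)) (1 / Real.cos x) x := by
  have hopen : IsOpen {t : ℝ | -1 < Real.sin t ∧ Real.sin t < 1} := by
    have : {t : ℝ | -1 < Real.sin t ∧ Real.sin t < 1}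
        = Real.sin ⁻¹' (Set.Ioo (-1) 1) := rfl
    rw [this]
    exact isOpen_Ioo.preimage Real.continuous_sin
  have hmem : x ∈ {t : ℝ | -1 < Real.sin t ∧ Real.sin t < 1} := ⟨hx1, hx2⟩
  have heq : (fun t => myArtanh (Real.sin t)) =ᶠ[nhds x]
      (fun t => (Real.log (1 + Real.sin t) - Real.log (1 - Real.sin t)) / 2) := by
    filter_upwards [hopen.mem_nhds hmem] with t ht
    have h1 : (0:ℝ) < 1 + Real.sin t := by linarith [ht.1]
    have h2 : (0:ℝ) < 1 - Real.sin t := by linarith [ht.2]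
    rw [myArtanh, Real.log_div h1.ne' h2.ne']
  have hs := Real.hasDerivAt_sin x
  have d1 : HasDerivAt (fun t => Real.log (1 + Real.sin t))
      (Real.cos x / (1 + Real.sin x)) x := by
    have := ((hs.const_add 1).log (by linarith : (1:ℝ) + Real.sin x ≠ 0))
    simpa using this
  have d2 : HasDerivAt (fun t => Real.log (1 - Real.sin t))
      (-Real.cos x / (1 - Real.sin x)) x := by
    have := ((hs.const_sub 1).log (by linarith : (1:ℝ) - Real.sin x ≠ 0))
    simpa using this
  have d3 := (d1.sub d2).div_const 2
  have hkey : (Real.cos x / (1 + Real.sin x) - -Real.cos x / (1 - Real.sin x)) / 2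
      = 1 / Real.cos x := by
    have hss : Real.sin x ^ 2 + Real.cos x ^ 2 = 1 := Real.sin_sq_add_cos_sq x
    have h1 : (0:ℝ) < 1 + Real.sin x := by linarith
    have h2 : (0:ℝ) < 1 - Real.sin x := by linarith
    field_simp
    nlinarith
  rw [hkey] at d3
  exact d3.congr_of_eventuallyEq heq

/-- For every k ∈ (0,1) and u ∈ (0, K(k)], sn(u,k) = sin(am(u,k)) > tanh(u). -/
theorem sn_gt_tanh (am : ℝ → ℝ → ℝ) (ham : IsJacobiAm am)
    (k : ℝ) (hk : k ∈ Set.Ioo (0:ℝ) 1)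
    (u : ℝ) (hu : u ∈ Set.Ioc (0:ℝ) (ellK k)) :
    Real.tanh u < Real.sin (am u k) := by
  obtain ⟨hk0, hk1⟩ := hk
  obtain ⟨hu0, huK⟩ := hu
  set φ := am u k with hφ
  have hint := ham k ⟨hk0, hk1⟩ u
  set f : ℝ → ℝ := fun x => 1 / Real.sqrt (1 - k ^ 2 * Real.sin x ^ 2) with hf
  -- positivity of the argument under the sqrt
  have harg : ∀ x : ℝ, 0 < 1 - k ^ 2 * Real.sin x ^ 2 := by
    intro x
    nlinarith [Real.sin_sq_le_one x, Real.neg_one_le_sin x, Real.sin_le_one x,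
      sq_nonneg (Real.sin x)]
  have hfpos : ∀ x : ℝ, 0 < f x := fun x =>
    div_pos one_pos (Real.sqrt_pos.2 (harg x))
  have hf1 : ∀ x : ℝ, 1 ≤ f x := by
    intro x
    rw [hf]
    rw [le_div_iff₀ (Real.sqrt_pos.2 (harg x))]
    rw [one_mul]
    calc Real.sqrt (1 - k ^ 2 * Real.sin x ^ 2) ≤ Real.sqrt 1 :=
          Real.sqrt_le_sqrt (by nlinarith [sq_nonneg (k * Real.sin x)])
      _ = 1 := Real.sqrt_one
  have hfcont : Continuous f := by
    apply Continuous.div continuous_const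
    · exact (Real.continuous_sqrt.comp (by continuity))
    · intro x
      exact (Real.sqrt_pos.2 (harg x)).ne'
  -- φ > 0
  have hφ0 : 0 < φ := by
    by_contra h
    push_neg at h
    have hnn : 0 ≤ ∫ x in φ..(0:ℝ), f x :=
      intervalIntegral.integral_nonneg h (fun x _ => (hfpos x).le)
    have hsym : (∫ x in (0:ℝ)..φ, f x) = -∫ x in φ..(0:ℝ), f x :=
      intervalIntegral.integral_symm _ _
    rw [hint] at hsym
    linarith
  -- φ ≤ π/2
  have hφle : φ ≤ π / 2 := by
    by_contra h
    push_neg at h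
    have hsplit : (∫ x in (0:ℝ)..(π/2), f x) + (∫ x in (π/2)..φ, f x)
        = ∫ x in (0:ℝ)..φ, f x :=
      intervalIntegral.integral_add_adjacent_intervals
        (hfcont.intervalIntegrable _ _) (hfcont.intervalIntegrable _ _)
    have hpos : 0 < ∫ x in (π/2)..φ, f x :=
      intervalIntegral.intervalIntegral_pos_of_pos_on
        (hfcont.intervalIntegrable _ _) (fun x _ => hfpos x) h
    have : ellK k + (∫ x in (π/2)..φ, f x) = u := by
      rw [← hint, ← hsplit]; rfl
    linarith
  have hsinφ1 : Real.sin φ ≤ 1 := Real.sin_le_one φ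
  rcases eq_or_lt_of_le hφle with heq | hlt
  · rw [heq, Real.sin_pi_div_two]
    exact myTanh_lt_one u
  · -- 0 < φ < π/2
    have hcosφ : 0 < Real.cos φ :=
      Real.cos_pos_of_mem_Ioo ⟨by linarith [Real.pi_pos], hlt⟩
    have hsinpos : 0 < Real.sin φ :=
      Real.sin_pos_of_pos_of_lt_pi hφ0 (by linarith [Real.pi_pos])
    have hsinlt : Real.sin φ < 1 := by
      nlinarith [Real.sin_sq_add_cos_sq φ]
    have hcos_pos : ∀ x ∈ Set.Icc (0:ℝ) φ, 0 < Real.cos x := by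
      intro x hx
      exact Real.cos_pos_of_mem_Ioo ⟨by linarith [Real.pi_pos, hx.1], by linarith [hx.2]⟩
    -- strict integral comparison: f < sec on (0, φ]
    have hcontsec : ContinuousOn (fun x => 1 / Real.cos x) (Set.Icc 0 φ) := by
      apply ContinuousOn.div continuousOn_const Real.continuous_cos.continuousOn
      intro x hx
      exact (hcos_pos x hx).ne'
    have hle : ∀ x ∈ Set.Ioc (0:ℝ) φ, f x ≤ 1 / Real.cos x := by
      intro x hx
      have hcx : 0 < Real.cos x := hcos_pos x ⟨hx.1.le, hx.2⟩
      have h1 : Real.cos x ≤ Real.sqrt (1 - k ^ 2 * Real.sin x ^ 2) := by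
        rw [← Real.sqrt_sq hcx.le]
        apply Real.sqrt_le_sqrt
        nlinarith [Real.sin_sq_add_cos_sq x,
          mul_nonneg (sq_nonneg (Real.sin x)) (show (0:ℝ) ≤ 1 - k^2 by nlinarith)]
      rw [hf]
      exact one_div_le_one_div_of_le hcx h1
    have hltpt : f φ < 1 / Real.cos φ := by
      have h1 : Real.cos φ < Real.sqrt (1 - k ^ 2 * Real.sin φ ^ 2) := by
        rw [← Real.sqrt_sq hcosφ.le]
        apply Real.sqrt_lt_sqrt (by positivity)
        nlinarith [Real.sin_sq_add_cos_sq φ,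
          mul_pos (mul_pos hsinpos hsinpos) (show (0:ℝ) < 1 - k^2 by nlinarith)]
      rw [hf]
      exact one_div_lt_one_div_of_lt hcosφ h1
    have hkey : (∫ x in (0:ℝ)..φ, f x) < ∫ x in (0:ℝ)..φ, 1 / Real.cos x :=
      intervalIntegral.integral_lt_integral_of_continuousOn_of_le_of_exists_lt hφ0
        hfcont.continuousOn hcontsec hle ⟨φ, ⟨hφ0.le, le_refl φ⟩, hltpt⟩
    -- FTC: ∫₀^φ sec = artanh (sin φ)
    have hftc : (∫ x in (0:ℝ)..φ, 1 / Real.cos x)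
        = myArtanh (Real.sin φ) - myArtanh (Real.sin 0) := by
      refine intervalIntegral.integral_eq_sub_of_hasDerivAt
        (f := fun t => myArtanh (Real.sin t)) ?_ ?_
      · intro x hx
        rw [Set.uIcc_of_le hφ0.le] at hx
        have hcx : 0 < Real.cos x := hcos_pos x hx
        have hs1 : -1 < Real.sin x := by nlinarith [Real.sin_sq_add_cos_sq x]
        have hs2 : Real.sin x < 1 := by nlinarith [Real.sin_sq_add_cos_sq x]
        exact myDeriv x hs1 hs2 hcx
      · exact (hcontsec.intervalIntegrable_of_Icc hφ0.le)
    have hartanh0 : myArtanh (Real.sin 0) = 0 := by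
      simp [myArtanh]
    rw [hftc, hartanh0, sub_zero, hint] at hkey
    -- conclude
    calc Real.tanh u < Real.tanh (myArtanh (Real.sin φ)) := myTanh_strictMono hkey
      _ = Real.sin φ := myTanh_myArtanh (by linarith) hsinlt
end
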